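/- Let d ≥ 2 and let |γ⟩ = (|1⟩⊗|1⟩ + |d⟩⊗|d⟩)/√2 ∈ ℂ^d⊗ℂ^d. If q ∈ ((1+√3)/(d+1+√3), 1], then the state (Φ_q ⊗ Φ_q)[|γ⟩⟨γ|], where Φ_q is the depolarizing channel on d×d complex matrices, has a non-positive-semidefinite partial transpose w.r.t. the first factor, and hence is not separable w.r.t. the cut d|d. Moreover, if q ∈ (2/(d²+2), 1], then Φ_q^{global}[|γ⟩⟨γ|], where Φ_q^{global} is the depolarizing channel on d²×d² complex matrices acting on matrices over ℂ^d⊗ℂ^d, has a non-positive-semidefinite partial transpose w.r.t. the first factor, and hence is not separable w.r.t. the cut d|d. -/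

import Mathlib

open Matrix Kronecker ComplexOrder BigOperators

namespace PaperEA

noncomputable section

/-- A matrix on a bipartite space is *separable* w.r.t. the cut `m|n` if it is a finite
sum of Kronecker products of positive semidefinite matrices. -/
def Sep {m n : Type*} [Fintype m] [Fintype n]
    (M : Matrix (m × n) (m × n) ℂ) : Prop :=
  ∃ (k : ℕ) (σ : Fin k → Matrix m m ℂ) (τ : Fin k → Matrix n n ℂ),
    (∀ i, (σ i).PosSemidef) ∧ (∀ i, (τ i).PosSemidef) ∧ M = ∑ i, σ i ⊗ₖ τ i

/-- Density matrix: positive semidefinite with unit trace. -/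
def IsDensity {m : Type*} [Fintype m] (ρ : Matrix m m ℂ) : Prop :=
  ρ.PosSemidef ∧ ρ.trace = 1

/-- A map on matrices is positive if it maps positive semidefinite matrices to
positive semidefinite matrices. -/
def IsPosMap {m n : Type*} [Fintype m] [Fintype n]
    (Φ : Matrix m m ℂ → Matrix n n ℂ) : Prop :=
  ∀ X : Matrix m m ℂ, X.PosSemidef → (Φ X).PosSemidef

/-- Choi matrix `(Φ ⊗ Id)[|Ψ+⟩⟨Ψ+|]` of a map `Φ` from `m×m` matrices to `n×n` matrices;
its entry at `((x,k),(y,l))` is `card m⁻¹ * Φ(|k⟩⟨l|) x y`. -/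
def choi {m n : Type*} [Fintype m] [DecidableEq m] [Fintype n]
    (Φ : Matrix m m ℂ → Matrix n n ℂ) : Matrix (n × m) (n × m) ℂ :=
  fun p q => (Fintype.card m : ℂ)⁻¹ * Φ (Matrix.single p.2 q.2 1) p.1 q.1

/-- Trace-preserving map. -/
def IsTP {m n : Type*} [Fintype m] [Fintype n]
    (Φ : Matrix m m ℂ → Matrix n n ℂ) : Prop :=
  ∀ X : Matrix m m ℂ, (Φ X).trace = X.trace

/-- Completely positive map: positive semidefinite Choi matrix. -/
def IsCP {m n : Type*} [Fintype m] [DecidableEq m] [Fintype n]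
    (Φ : Matrix m m ℂ → Matrix n n ℂ) : Prop :=
  (choi Φ).PosSemidef

/-- Channel: completely positive and trace-preserving. -/
def IsChannel {m n : Type*} [Fintype m] [DecidableEq m] [Fintype n]
    (Φ : Matrix m m ℂ → Matrix n n ℂ) : Prop :=
  IsCP Φ ∧ IsTP Φ

/-- Entanglement-breaking: separable Choi matrix (output|input cut). -/
def IsEB {m n : Type*} [Fintype m] [DecidableEq m] [Fintype n]
    (Φ : Matrix m m ℂ → Matrix n n ℂ) : Prop :=
  Sep (choi Φ)

/-- Entanglement-breaking channel. -/
def IsEBChannel {m n : Type*} [Fintype m] [DecidableEq m] [Fintype n]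
    (Φ : Matrix m m ℂ → Matrix n n ℂ) : Prop :=
  IsChannel Φ ∧ IsEB Φ

/-- Entanglement-annihilating map: every density matrix is sent to a matrix separable
w.r.t. the output cut `A'|B'`. -/
def IsEA {A B A' B' : Type*} [Fintype A] [Fintype B] [Fintype A'] [Fintype B']
    (Φ : Matrix (A × B) (A × B) ℂ → Matrix (A' × B') (A' × B') ℂ) : Prop :=
  ∀ ρ : Matrix (A × B) (A × B) ℂ, IsDensity ρ → Sep (Φ ρ)

/-- Positive entanglement-annihilating map. -/
def IsPEA {A B A' B' : Type*} [Fintype A] [Fintype B] [Fintype A'] [Fintype B']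
    (Φ : Matrix (A × B) (A × B) ℂ → Matrix (A' × B') (A' × B') ℂ) : Prop :=
  IsPosMap Φ ∧ IsEA Φ

/-- Block-positive (Hermitian) operator w.r.t. the cut `m|n`:
`⟨x⊗y| ξ |x⊗y⟩ ≥ 0` for all product vectors. -/
def BlockPositive {m n : Type*} [Fintype m] [Fintype n]
    (ξ : Matrix (m × n) (m × n) ℂ) : Prop :=
  ξ.IsHermitian ∧ ∀ (x : m → ℂ) (y : n → ℂ),
    0 ≤ star (fun p : m × n => x p.1 * y p.2) ⬝ᵥ ξ *ᵥ fun p : m × n => x p.1 * y p.2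

/-- Partial trace over the first tensor factor. -/
def ptrace1 {m n : Type*} [Fintype m] (Ω : Matrix (m × n) (m × n) ℂ) : Matrix n n ℂ :=
  fun k l => ∑ i : m, Ω (i, k) (i, l)

/-- Partial transpose w.r.t. the first tensor factor. -/
def ptrans1 {m n : Type*} (ρ : Matrix (m × n) (m × n) ℂ) : Matrix (m × n) (m × n) ℂ :=
  fun p q => ρ (q.1, p.2) (p.1, q.2)

/-- Tensor product `Φ1 ⊗ Φ2` of (linear) maps on matrices. -/
def tensorMap {A B A' B' : Type*} [Fintype A] [DecidableEq A] [Fintype B] [DecidableEq B]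
    [Fintype A'] [Fintype B']
    (Φ1 : Matrix A A ℂ → Matrix A' A' ℂ) (Φ2 : Matrix B B ℂ → Matrix B' B' ℂ)
    (X : Matrix (A × B) (A × B) ℂ) : Matrix (A' × B') (A' × B') ℂ :=
  ∑ a1 : A, ∑ a2 : A, ∑ b1 : B, ∑ b2 : B,
    X (a1, b1) (a2, b2) • (Φ1 (Matrix.single a1 a2 1) ⊗ₖ Φ2 (Matrix.single b1 b2 1))

/-- Depolarizing map `Φ_q[X] = q X + (1−q) tr(X) I/d`. -/
def depolM {m : Type*} [Fintype m] [DecidableEq m] (q : ℝ)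
    (X : Matrix m m ℂ) : Matrix m m ℂ :=
  (q : ℂ) • X + ((1 - q : ℝ) : ℂ) • X.trace • (Fintype.card m : ℂ)⁻¹ • (1 : Matrix m m ℂ)

def pauli1 : Matrix (Fin 2) (Fin 2) ℂ := !![0, 1; 1, 0]
def pauli2 : Matrix (Fin 2) (Fin 2) ℂ := !![0, -Complex.I; Complex.I, 0]
def pauli3 : Matrix (Fin 2) (Fin 2) ℂ := !![1, 0; 0, -1]

/-- The unital qubit map `Υ_λ[X] = ½(tr(X) I + Σ_j λ_j tr(σ_j X) σ_j)`. -/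
def Ups (l1 l2 l3 : ℝ) (X : Matrix (Fin 2) (Fin 2) ℂ) : Matrix (Fin 2) (Fin 2) ℂ :=
  (2 : ℂ)⁻¹ • (X.trace • (1 : Matrix (Fin 2) (Fin 2) ℂ)
    + (l1 : ℂ) • (pauli1 * X).trace • pauli1
    + (l2 : ℂ) • (pauli2 * X).trace • pauli2
    + (l3 : ℂ) • (pauli3 * X).trace • pauli3)

/-- The maximally entangled unit vector `|Ψ+⟩ = d^{-1/2} Σ_i |i⟩⊗|i⟩`. -/
def maxEntVec (d : ℕ) : Fin d × Fin d → ℂ :=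
  fun p => if p.1 = p.2 then ((Real.sqrt d : ℂ))⁻¹ else 0

/-- The maximally entangled state `|Ψ+⟩⟨Ψ+|`. -/
def maxEntState (d : ℕ) : Matrix (Fin d × Fin d) (Fin d × Fin d) ℂ :=
  vecMulVec (maxEntVec d) (star (maxEntVec d))

/-- The vector `|γ⟩ = (|1⟩⊗|1⟩ + |d⟩⊗|d⟩)/√2`. -/
def gammaVec (d : ℕ) : Fin d × Fin d → ℂ :=
  fun p => if (p.1 : ℕ) = (p.2 : ℕ) ∧ ((p.1 : ℕ) = 0 ∨ (p.1 : ℕ) = d - 1)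
    then ((Real.sqrt 2 : ℂ))⁻¹ else 0

/-- The state `|γ⟩⟨γ|`. -/
def gammaState (d : ℕ) : Matrix (Fin d × Fin d) (Fin d × Fin d) ℂ :=
  vecMulVec (gammaVec d) (star (gammaVec d))

end

end PaperEA

open PaperEA

/-!
Take `a = 1`, `b = d` and test the partial transpose of either state on `|b a⟩ - |a b⟩`. The
coherence `|a a⟩⟨b b|` of `γ` survives the noise with weight `q²/2` (resp. `q/2`) and the
partial transpose moves it into the off-diagonal corner of this `2 × 2` block, while the diagonal
entries only see the noise, of order `(1 - q)/d`. Above the stated thresholds on `q` the block is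
indefinite, and separable operators have positive semidefinite partial transpose.
-/

theorem two_mul_div_add_sq_div_sub_sq_neg {d q : ℝ} (hd : 1 ≤ d)
    (hq : (1 + √3) / (d + 1 + √3) < q) :
    2 * q * (1 - q) / d + 2 * (1 - q) ^ 2 / d ^ 2 - q ^ 2 < 0 := by
  have hs : √3 ^ 2 = 3 := Real.sq_sqrt (by norm_num)
  have hs1 : 1 < √3 := by rw [Real.lt_sqrt zero_le_one]; norm_num
  have hs2 : √3 < 2 := by rw [Real.sqrt_lt' two_pos]; norm_num
  have hq0 : 0 < q := lt_trans (by positivity) hq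
  have hA : 0 < (d + 1 + √3) * q - (1 + √3) := by
    rw [div_lt_iff₀ (by positivity)] at hq
    linarith
  have hB : 0 < (d + 1 - √3) * q + (√3 - 1) := by
    have : 0 < d + 1 - √3 := by linarith
    positivity
  -- `(d + 1 + √3) (d + 1 - √3) = d² + 2d - 2` is the leading coefficient in `q`, and the
  -- threshold `(1 + √3) / (d + 1 + √3)` is the positive root.
  have hfactor : 2 * q * (1 - q) * d + 2 * (1 - q) ^ 2 - q ^ 2 * d ^ 2
      = -(((d + 1 + √3) * q - (1 + √3)) * ((d + 1 - √3) * q + (√3 - 1))) := by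
    linear_combination -(q - 1) ^ 2 * hs
  calc 2 * q * (1 - q) / d + 2 * (1 - q) ^ 2 / d ^ 2 - q ^ 2
      = (2 * q * (1 - q) * d + 2 * (1 - q) ^ 2 - q ^ 2 * d ^ 2) / d ^ 2 := by
        field_simp
    _ < 0 := by
      rw [hfactor]
      exact div_neg_of_neg_of_pos (neg_neg_of_pos (mul_pos hA hB)) (by positivity)

theorem two_mul_div_sq_sub_neg {d q : ℝ} (hd : d ≠ 0) (hq : 2 / (d ^ 2 + 2) < q) :
    2 * (1 - q) / d ^ 2 - q < 0 := by
  rw [div_lt_iff₀ (by positivity)] at hq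
  calc 2 * (1 - q) / d ^ 2 - q = (2 - q * (d ^ 2 + 2)) / d ^ 2 := by
        field_simp
        ring
    _ < 0 := div_neg_of_neg_of_pos (by linarith) (by positivity)

theorem Matrix.PosSemidef.apply_add_apply_sub_apply_sub_apply_nonneg {ι : Type*} [Fintype ι]
    {N : Matrix ι ι ℂ} (hN : N.PosSemidef) (i j : ι) :
    0 ≤ N i i + N j j - N i j - N j i := by
  classical
  convert hN.dotProduct_mulVec_nonneg (Pi.single i 1 - Pi.single j 1) using 1
  simp only [star_sub, Pi.star_single, star_one, mulVec_sub, mulVec_single, MulOpposite.op_one,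
    one_smul, dotProduct_sub, sub_dotProduct, single_dotProduct, col_apply, one_mul]
  ring

namespace PaperEA

section

variable {m n : Type*} [Fintype m] [Fintype n]

theorem Sep.posSemidef_ptrans1 {M : Matrix (m × n) (m × n) ℂ} (h : Sep M) :
    (ptrans1 M).PosSemidef := by
  obtain ⟨k, σ, τ, hσ, hτ, rfl⟩ := h
  have : ptrans1 (∑ i, σ i ⊗ₖ τ i) = ∑ i, (σ i)ᵀ ⊗ₖ τ i := by
    ext
    simp [ptrans1, Matrix.sum_apply]
  rw [this]
  exact posSemidef_sum _ fun i _ => (hσ i).transpose.kronecker (hτ i)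

theorem not_posSemidef_ptrans1_of_lt {M : Matrix (m × n) (m × n) ℂ} (i j : m) (k l : n)
    (h : M (j, k) (j, k) + M (i, l) (i, l) - M (i, k) (j, l) - M (j, l) (i, k) < 0) :
    ¬ (ptrans1 M).PosSemidef := fun hM =>
  (hM.apply_add_apply_sub_apply_sub_apply_nonneg (j, k) (i, l)).not_gt h

theorem tensorMap_apply {A B : Type*} [Fintype A] [DecidableEq A] [Fintype B] [DecidableEq B]
    (Φ1 : Matrix A A ℂ → Matrix m m ℂ) (Φ2 : Matrix B B ℂ → Matrix n n ℂ)
    (X : Matrix (A × B) (A × B) ℂ) (x y : m × n) :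
    tensorMap Φ1 Φ2 X x y = ∑ a1, ∑ a2, ∑ b1, ∑ b2,
      X (a1, b1) (a2, b2) * (Φ1 (single a1 a2 1) x.1 y.1 * Φ2 (single b1 b2 1) x.2 y.2) := by
  simp only [tensorMap, Matrix.sum_apply, Matrix.smul_apply, kroneckerMap_apply, smul_eq_mul]

variable [DecidableEq m] [DecidableEq n]

theorem depolM_apply (q : ℝ) (X : Matrix m m ℂ) (x y : m) :
    depolM q X x y = q * X x y
      + (1 - q : ℝ) * (Fintype.card m : ℂ)⁻¹ * X.trace * (1 : Matrix m m ℂ) x y := by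
  simp only [depolM, Matrix.add_apply, Matrix.smul_apply, smul_eq_mul]
  ring

theorem depolM_single_apply (q : ℝ) (i j x y : m) :
    depolM q (single i j 1) x y = q * (if i = x ∧ j = y then 1 else 0)
      + (1 - q : ℝ) * (Fintype.card m : ℂ)⁻¹ * (if i = j then 1 else 0)
        * (if x = y then 1 else 0) := by
  rw [depolM_apply, single_apply, one_apply]
  congr 2
  split_ifs with h
  · subst h; rw [trace_single_eq_same]
  · rw [trace_single_eq_of_ne _ _ _ h]

theorem tensorMap_depolM_apply (q r : ℝ) (X : Matrix (m × n) (m × n) ℂ) (x y : m × n) :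
    tensorMap (depolM q) (depolM r) X x y =
      q * r * X x y
      + q * (1 - r : ℝ) * (Fintype.card n : ℂ)⁻¹ * (∑ k, X (x.1, k) (y.1, k))
        * (1 : Matrix n n ℂ) x.2 y.2
      + (1 - q : ℝ) * (Fintype.card m : ℂ)⁻¹ * r * ptrace1 X x.2 y.2 * (1 : Matrix m m ℂ) x.1 y.1
      + (1 - q : ℝ) * (Fintype.card m : ℂ)⁻¹ * (1 - r : ℝ) * (Fintype.card n : ℂ)⁻¹ * X.trace
        * (1 : Matrix (m × n) (m × n) ℂ) x y := by
  simp only [tensorMap_apply, depolM_single_apply, mul_add, add_mul, Finset.sum_add_distrib]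
  simp only [ite_and, mul_ite, mul_one, mul_zero, ite_mul, zero_mul, Finset.sum_ite_irrel,
    Finset.sum_ite_eq', Finset.mem_univ, ↓reduceIte, Finset.sum_const_zero, Prod.mk.eta,
    Complex.ofReal_sub, Complex.ofReal_one, Finset.sum_ite_eq, one_apply, ptrace1, trace,
    diag_apply, Fintype.sum_prod_type, Prod.ext_iff, ← Finset.sum_mul]
  split_ifs <;> ring

end

section

variable {m : Type*} [DecidableEq m]

noncomputable def bellVec (a b : m) : m × m → ℂ :=
  fun p => if p = (a, a) ∨ p = (b, b) then (√2 : ℂ)⁻¹ else 0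

noncomputable def bellState (a b : m) : Matrix (m × m) (m × m) ℂ :=
  vecMulVec (bellVec a b) (star (bellVec a b))

theorem bellState_apply (a b : m) (p p' : m × m) :
    bellState a b p p' =
      if (p = (a, a) ∨ p = (b, b)) ∧ (p' = (a, a) ∨ p' = (b, b)) then 2⁻¹ else 0 := by
  have h : (√2 : ℂ)⁻¹ * (√2 : ℂ)⁻¹ = 2⁻¹ := by
    rw [← mul_inv, ← Complex.ofReal_mul, Real.mul_self_sqrt zero_le_two, Complex.ofReal_ofNat]
  simp only [bellState, bellVec, vecMulVec_apply, Pi.star_apply]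
  split_ifs <;> simp_all [← Complex.ofReal_inv, Complex.conj_ofReal]

theorem gammaState_eq_bellState {d : ℕ} (hd : 2 ≤ d) :
    gammaState d = bellState (⟨0, by omega⟩ : Fin d) ⟨d - 1, by omega⟩ := by
  have : gammaVec d = bellVec (⟨0, by omega⟩ : Fin d) ⟨d - 1, by omega⟩ := by
    ext p
    simp only [gammaVec, bellVec, Prod.ext_iff, Fin.ext_iff]
    congr 1
    simp only [eq_iff_iff]
    omega
  rw [gammaState, bellState, this]

variable [Fintype m] {a b : m}

theorem trace_bellState (hab : a ≠ b) : (bellState a b).trace = 1 := by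
  have hpair : (a, a) ≠ (b, b) := by simp [hab]
  simp [Matrix.trace, bellState_apply, Finset.sum_ite, Finset.filter_or, Finset.filter_eq',
    Finset.card_pair hpair]

theorem not_posSemidef_ptrans1_tensorMap_depolM_bellState (hab : a ≠ b) {q : ℝ}
    (hq : (1 + √3) / (Fintype.card m + 1 + √3) < q) :
    ¬ (ptrans1 (tensorMap (depolM q) (depolM q) (bellState a b))).PosSemidef := by
  have key := two_mul_div_add_sq_div_sub_sq_neg (by exact_mod_cast Fintype.card_pos_iff.2 ⟨a⟩) hq
  apply not_posSemidef_ptrans1_of_lt a b a b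
  simp only [tensorMap_depolM_apply, bellState_apply, trace_bellState hab, ptrace1, one_apply,
    Prod.mk.injEq, hab, hab.symm, and_true, and_false, true_and, false_and, or_self, and_self,
    or_false, or_true, false_or, ↓reduceIte, mul_zero, mul_one, zero_add, add_zero,
    Finset.sum_ite_eq', Finset.mem_univ]
  convert Complex.real_lt_real.mpr key using 1 <;> push_cast <;> ring

theorem not_posSemidef_ptrans1_depolM_bellState (hab : a ≠ b) {q : ℝ}
    (hq : 2 / ((Fintype.card m : ℝ) ^ 2 + 2) < q) :
    ¬ (ptrans1 (depolM (m := m × m) q (bellState a b))).PosSemidef := by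
  have key := two_mul_div_sq_sub_neg (by exact_mod_cast (Fintype.card_pos_iff.2 ⟨a⟩).ne') hq
  apply not_posSemidef_ptrans1_of_lt a b a b
  simp only [depolM_apply, bellState_apply, trace_bellState hab, one_apply, Fintype.card_prod,
    Prod.mk.injEq, hab, hab.symm, and_true, and_false, or_self, and_self, or_false, or_true,
    ↓reduceIte, mul_zero, mul_one, zero_add, add_zero]
  convert Complex.real_lt_real.mpr key using 1 <;> push_cast <;> ring

end

end PaperEA

/-- for `|γ⟩ = (|1⟩⊗|1⟩ + |d⟩⊗|d⟩)/√2`, the state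
`(Φ_q ⊗ Φ_q)[|γ⟩⟨γ|]` has non-PSD partial transpose (hence is not separable) whenever
`q > (1+√3)/(d+1+√3)`, and the state `Φ_q^{global}[|γ⟩⟨γ|]` has non-PSD partial
transpose (hence is not separable) whenever `q > 2/(d²+2)`. -/
theorem stmt_19 (d : ℕ) (hd : 2 ≤ d) :
    (∀ q : ℝ, q ∈ Set.Ioc ((1 + Real.sqrt 3) / ((d : ℝ) + 1 + Real.sqrt 3)) 1 →
      ¬ (ptrans1 (tensorMap (depolM (m := Fin d) q) (depolM (m := Fin d) q)
          (gammaState d))).PosSemidef ∧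
      ¬ Sep (tensorMap (depolM (m := Fin d) q) (depolM (m := Fin d) q)
          (gammaState d))) ∧
    (∀ q : ℝ, q ∈ Set.Ioc (2 / ((d : ℝ) ^ 2 + 2)) 1 →
      ¬ (ptrans1 (depolM (m := Fin d × Fin d) q (gammaState d))).PosSemidef ∧
      ¬ Sep (depolM (m := Fin d × Fin d) q (gammaState d))) := by
  have hab : (⟨0, by omega⟩ : Fin d) ≠ ⟨d - 1, by omega⟩ := Fin.ne_of_val_ne (by dsimp only; omega)
  rw [gammaState_eq_bellState hd]
  refine ⟨fun q hq => ?_, fun q hq => ?_⟩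
  · have h := not_posSemidef_ptrans1_tensorMap_depolM_bellState hab
      (by simpa only [Fintype.card_fin] using hq.1)
    exact ⟨h, fun hsep => h hsep.posSemidef_ptrans1⟩
  · have h := not_posSemidef_ptrans1_depolM_bellState hab
      (by simpa only [Fintype.card_fin] using hq.1)
    exact ⟨h, fun hsep => h hsep.posSemidef_ptrans1⟩
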